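/- arXiv:2506.08213 — 5 statements merged into one kernel-verified Lean document; each statement's English description precedes it below -/
import Mathlib

section
/- Let C(n,m) be the caterpillar tree with spine path x_1, …, x_n (n ≥ 3) where each spine vertex has exactly m ≥ 1 pendant leaves attached. Then the Albertson index satisfies irr(C(n,m)) = m(m+1)n - 2m + 2. -/
open scoped Classical

/-- Albertson irregularity index: sum over edges of |deg u - deg v|. -/
noncomputable def albertson {V : Type*} [Fintype V] (G : SimpleGraph V) : ℤ :=
  ∑ e ∈ G.edgeFinset,
    Sym2.lift ⟨fun u v => |(G.degree u : ℤ) - (G.degree v : ℤ)|,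
      fun u v => by simp [abs_sub_comm]⟩ e

/-- Sigma index: sum over edges of (deg u - deg v)^2. -/
noncomputable def sigmaIdx {V : Type*} [Fintype V] (G : SimpleGraph V) : ℤ :=
  ∑ e ∈ G.edgeFinset,
    Sym2.lift ⟨fun u v => ((G.degree u : ℤ) - (G.degree v : ℤ))^2,
      fun u v => by ring⟩ e

/-- The star graph on `n` vertices: vertex 0 is the center, adjacent to all others. -/
def starGraph (n : ℕ) : SimpleGraph (Fin n) :=
  SimpleGraph.fromRel (fun u _ => u.val = 0)

/-- Caterpillar C(n,m): spine path x_1,...,x_n, each spine vertex with m pendant leaves. -/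
def caterpillar (n m : ℕ) : SimpleGraph (Fin n ⊕ Fin n × Fin m) :=
  SimpleGraph.fromRel (fun a b =>
    match a, b with
    | Sum.inl i, Sum.inl j => (i : ℕ) + 1 = (j : ℕ)
    | Sum.inl i, Sum.inr p => i = p.1
    | _, _ => False)

open Finset

lemma two_mul_sum_edges {V : Type*} [Fintype V] (G : SimpleGraph V)
    (f : V → V → ℤ) (hf : ∀ u v, f u v = f v u) :
    2 * ∑ e ∈ G.edgeFinset, Sym2.lift ⟨f, hf⟩ e
      = ∑ u, ∑ v, if G.Adj u v then f u v else 0 := by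
  classical
  have key : ∑ d : G.Dart, f d.fst d.snd
      = 2 * ∑ e ∈ G.edgeFinset, Sym2.lift ⟨f, hf⟩ e := by
    have h1 : ∀ d : G.Dart, f d.fst d.snd = Sym2.lift ⟨f, hf⟩ d.edge := by
      intro d; rfl
    simp only [h1]
    rw [← Finset.sum_fiberwise_of_maps_to (t := G.edgeFinset) (g := SimpleGraph.Dart.edge)
      (fun d _ => by rw [SimpleGraph.mem_edgeFinset]; exact d.edge_mem)
      (fun d => Sym2.lift ⟨f, hf⟩ d.edge)]
    rw [Finset.mul_sum]
    refine Finset.sum_congr rfl fun e he => ?_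
    have hcard : #{d : G.Dart | d.edge = e} = 2 :=
      G.dart_edge_fiber_card e (SimpleGraph.mem_edgeFinset.mp he)
    rw [Finset.sum_congr rfl (fun d hd => by
      rw [(Finset.mem_filter.mp hd).2]), Finset.sum_const, hcard]
    simp
  rw [← key]
  have h2 : ∑ d : G.Dart, f d.fst d.snd
      = ∑ p ∈ (univ : Finset (V × V)).filter (fun p => G.Adj p.1 p.2), f p.1 p.2 := by
    refine Finset.sum_bij (fun d _ => d.toProd) ?_ ?_ ?_ ?_
    · intro d _; simp [d.adj]
    · intro a _ b _ h; exact SimpleGraph.Dart.ext _ _ h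
    · intro p hp; exact ⟨⟨p, (Finset.mem_filter.mp hp).2⟩, Finset.mem_univ _, rfl⟩
    · intro d _; rfl
  rw [h2, Finset.sum_filter, Fintype.sum_prod_type]

lemma cat_adj_ll {n m : ℕ} (i j : Fin n) :
    (caterpillar n m).Adj (Sum.inl i) (Sum.inl j) ↔
      ((i : ℕ) + 1 = (j : ℕ) ∨ (j : ℕ) + 1 = (i : ℕ)) := by
  simp only [caterpillar, SimpleGraph.fromRel_adj]
  constructor
  · rintro ⟨-, h⟩; exact h
  · intro h
    refine ⟨fun hc => ?_, h⟩
    have : (i : ℕ) = (j : ℕ) := by rw [Sum.inl.injEq] at hc; exact congrArg Fin.val hc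
    omega

lemma cat_adj_lr {n m : ℕ} (i : Fin n) (p : Fin n × Fin m) :
    (caterpillar n m).Adj (Sum.inl i) (Sum.inr p) ↔ i = p.1 := by
  simp only [caterpillar, SimpleGraph.fromRel_adj]
  constructor
  · rintro ⟨-, h | h⟩; · exact h
    · exact h.elim
  · intro h; exact ⟨by simp, Or.inl h⟩

lemma cat_adj_rl {n m : ℕ} (i : Fin n) (p : Fin n × Fin m) :
    (caterpillar n m).Adj (Sum.inr p) (Sum.inl i) ↔ i = p.1 := by
  rw [SimpleGraph.adj_comm]; exact cat_adj_lr i p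

lemma cat_adj_rr {n m : ℕ} (p q : Fin n × Fin m) :
    ¬ (caterpillar n m).Adj (Sum.inr p) (Sum.inr q) := by
  simp only [caterpillar, SimpleGraph.fromRel_adj]
  rintro ⟨-, h | h⟩ <;> exact h

/-- degree of a spine vertex, as a function of its index. -/
def Dn (n m x : ℕ) : ℕ := m + (if 0 < x then 1 else 0) + (if x + 1 < n then 1 else 0)

lemma cat_deg_inr {n m : ℕ} (p : Fin n × Fin m) :
    (caterpillar n m).degree (Sum.inr p) = 1 := by
  have : (caterpillar n m).neighborFinset (Sum.inr p) = {Sum.inl p.1} := by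
    ext v
    rw [SimpleGraph.mem_neighborFinset]
    rcases v with j | q
    · rw [cat_adj_rl]
      simp [eq_comm]
    · simp [cat_adj_rr]
  rw [← SimpleGraph.card_neighborFinset_eq_degree, this, Finset.card_singleton]

lemma cat_deg_inl {n m : ℕ} (i : Fin n) :
    (caterpillar n m).degree (Sum.inl i) = Dn n m (i : ℕ) := by
  rw [← SimpleGraph.card_neighborFinset_eq_degree, SimpleGraph.neighborFinset_eq_filter,
    Finset.card_filter]
  rw [Fintype.sum_sum_type]
  have h1 : ∑ j : Fin n, (if (caterpillar n m).Adj (Sum.inl i) (Sum.inl j) then 1 else 0)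
      = (if 0 < (i:ℕ) then 1 else 0) + (if (i:ℕ) + 1 < n then 1 else 0) := by
    simp only [cat_adj_ll]
    have hsplit : ∀ j : Fin n,
        (if ((i:ℕ) + 1 = (j:ℕ) ∨ (j:ℕ) + 1 = (i:ℕ)) then (1:ℕ) else 0)
        = (if (i:ℕ) + 1 = (j:ℕ) then 1 else 0) + (if (j:ℕ) + 1 = (i:ℕ) then 1 else 0) := by
      intro j; split_ifs <;> omega
    simp only [hsplit, Finset.sum_add_distrib]
    rw [Fin.sum_univ_eq_sum_range (fun x => if (i:ℕ) + 1 = x then (1:ℕ) else 0),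
      Fin.sum_univ_eq_sum_range (fun x => if x + 1 = (i:ℕ) then (1:ℕ) else 0)]
    rw [Finset.sum_ite_eq (Finset.range n) ((i:ℕ)+1) (fun _ => (1:ℕ))]
    have : ∀ x ∈ Finset.range n, (if x + 1 = (i:ℕ) then (1:ℕ) else 0)
        = (if (i:ℕ) - 1 = x then (if 0 < (i:ℕ) then 1 else 0) else 0) := by
      intro x _; split_ifs <;> omega
    rw [Finset.sum_congr rfl this,
      Finset.sum_ite_eq (Finset.range n) ((i:ℕ)-1) (fun _ => if 0 < (i:ℕ) then (1:ℕ) else 0)]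
    have hi := i.isLt
    simp only [Finset.mem_range]
    split_ifs <;> omega
  have h2 : ∑ p : Fin n × Fin m, (if (caterpillar n m).Adj (Sum.inl i) (Sum.inr p) then 1 else 0)
      = m := by
    simp only [cat_adj_lr]
    rw [Fintype.sum_prod_type]
    have : ∀ a : Fin n, ∑ b : Fin m, (if i = (a, b).1 then (1:ℕ) else 0)
        = (if i = a then m else 0) := by
      intro a; simp only []
      split_ifs <;> simp
    simp only [this, Finset.sum_ite_eq (Finset.univ : Finset (Fin n)) i (fun _ => m),
      Finset.mem_univ, if_true]
  rw [h1, h2, Dn]; omega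

theorem stmt4 (n m : ℕ) (hn : 3 ≤ n) (hm : 1 ≤ m) :
    albertson (caterpillar n m) = (m : ℤ) * ((m : ℤ) + 1) * (n : ℤ) - 2 * (m : ℤ) + 2 := by
  have key : 2 * albertson (caterpillar n m)
      = ∑ u, ∑ v, if (caterpillar n m).Adj u v then
          |((caterpillar n m).degree u : ℤ) - ((caterpillar n m).degree v : ℤ)| else 0 :=
    two_mul_sum_edges (caterpillar n m) _ (fun u v => by simp [abs_sub_comm])
  -- the common leaf-sum
  have hSZ : ∑ x ∈ Finset.range n, |(Dn n m x : ℤ) - 1| = n * m + n - 2 := by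
    have hpt : ∀ x ∈ Finset.range n, |(Dn n m x : ℤ) - 1|
        = ((m : ℤ) - 1) + (1 - if x = 0 then 1 else 0) + (1 - if x = n - 1 then 1 else 0) := by
      intro x hx
      rw [Finset.mem_range] at hx
      unfold Dn
      push_cast
      rw [Int.abs_eq_natAbs]
      split_ifs <;> omega
    rw [Finset.sum_congr rfl hpt]
    have h0 : (0 : ℕ) ∈ Finset.range n := Finset.mem_range.mpr (by omega)
    have h1 : n - 1 ∈ Finset.range n := Finset.mem_range.mpr (by omega)
    simp only [Finset.sum_add_distrib, Finset.sum_sub_distrib,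
      Finset.sum_ite_eq' (Finset.range n) 0 (fun _ => (1:ℤ)),
      Finset.sum_ite_eq' (Finset.range n) (n-1) (fun _ => (1:ℤ)),
      if_pos h0, if_pos h1, Finset.sum_const, Finset.card_range, nsmul_eq_mul]
    push_cast
    ring
  -- block LL
  have hLL : ∑ i : Fin n, ∑ j : Fin n,
      (if ((i:ℕ) + 1 = (j:ℕ) ∨ (j:ℕ) + 1 = (i:ℕ)) then
        |(Dn n m (i:ℕ) : ℤ) - (Dn n m (j:ℕ) : ℤ)| else 0) = 4 := by
    have step1 : ∑ i : Fin n, ∑ j : Fin n,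
        (if ((i:ℕ) + 1 = (j:ℕ) ∨ (j:ℕ) + 1 = (i:ℕ)) then
          |(Dn n m (i:ℕ) : ℤ) - (Dn n m (j:ℕ) : ℤ)| else 0)
        = ∑ x ∈ Finset.range n, ∑ y ∈ Finset.range n,
          (if (x + 1 = y ∨ y + 1 = x) then |(Dn n m x : ℤ) - (Dn n m y : ℤ)| else 0) := by
      rw [← Fin.sum_univ_eq_sum_range (fun x => ∑ y ∈ Finset.range n,
        (if (x + 1 = y ∨ y + 1 = x) then |(Dn n m x : ℤ) - (Dn n m y : ℤ)| else 0)) n]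
      refine Finset.sum_congr rfl fun i _ => ?_
      exact Fin.sum_univ_eq_sum_range
        (fun y => if ((i:ℕ) + 1 = y ∨ y + 1 = (i:ℕ)) then
          |(Dn n m (i:ℕ) : ℤ) - (Dn n m y : ℤ)| else 0) n
    rw [step1]
    have hsplit : ∀ x y : ℕ,
        (if (x + 1 = y ∨ y + 1 = x) then |(Dn n m x : ℤ) - (Dn n m y : ℤ)| else 0)
        = (if x + 1 = y then |(Dn n m x : ℤ) - (Dn n m y : ℤ)| else 0)
          + (if y + 1 = x then |(Dn n m x : ℤ) - (Dn n m y : ℤ)| else 0) := by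
      intro x y
      by_cases h1 : x + 1 = y
      · by_cases h2 : y + 1 = x
        · exact (by omega : False).elim
        · simp [h1, h2]
      · by_cases h2 : y + 1 = x
        · simp [h1, h2]
        · simp [h1, h2]
    simp only [hsplit, Finset.sum_add_distrib]
    have hS1 : ∑ x ∈ Finset.range n, ∑ y ∈ Finset.range n,
        (if x + 1 = y then |(Dn n m x : ℤ) - (Dn n m y : ℤ)| else 0) = 2 := by
      have hinner : ∀ x ∈ Finset.range n, ∑ y ∈ Finset.range n,
          (if x + 1 = y then |(Dn n m x : ℤ) - (Dn n m y : ℤ)| else 0)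
          = (if x = 0 then 1 else 0) + (if x + 2 = n then 1 else 0) := by
        intro x hx
        rw [Finset.mem_range] at hx
        rw [Finset.sum_ite_eq (Finset.range n) (x+1) (fun y => |(Dn n m x : ℤ) - (Dn n m y : ℤ)|)]
        unfold Dn
        push_cast
        rw [Int.abs_eq_natAbs]
        simp only [Finset.mem_range]
        split_ifs <;> omega
      rw [Finset.sum_congr rfl hinner, Finset.sum_add_distrib]
      have e1 : ∀ x ∈ Finset.range n, (if x + 2 = n then (1:ℤ) else 0)
          = (if x = n - 2 then 1 else 0) := by
        intro x hx; rw [Finset.mem_range] at hx; split_ifs <;> omega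
      rw [Finset.sum_congr rfl e1,
        Finset.sum_ite_eq' (Finset.range n) 0 (fun _ => (1:ℤ)),
        Finset.sum_ite_eq' (Finset.range n) (n-2) (fun _ => (1:ℤ))]
      have h0 : (0 : ℕ) ∈ Finset.range n := by simp; omega
      have h2 : n - 2 ∈ Finset.range n := by simp [Finset.mem_range]; omega
      rw [if_pos h0, if_pos h2]; norm_num
    have hS2 : ∑ x ∈ Finset.range n, ∑ y ∈ Finset.range n,
        (if y + 1 = x then |(Dn n m x : ℤ) - (Dn n m y : ℤ)| else 0) = 2 := by
      rw [Finset.sum_comm]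
      rw [← hS1]
      refine Finset.sum_congr rfl fun y _ => Finset.sum_congr rfl fun x _ => ?_
      rw [abs_sub_comm]
    rw [hS1, hS2]; norm_num
  rw [Fintype.sum_sum_type] at key
  simp only [Fintype.sum_sum_type] at key
  simp only [cat_adj_ll, cat_adj_lr, cat_adj_rl, cat_adj_rr, cat_deg_inl, cat_deg_inr,
    if_false, Finset.sum_const_zero, add_zero] at key
  -- now key's RHS should be: LL + LR + RL
  -- LR block
  have hLR : ∑ i : Fin n, ∑ p : Fin n × Fin m,
      (if i = p.1 then |(Dn n m (i:ℕ) : ℤ) - (1 : ℤ)| else 0)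
      = (m : ℤ) * ((n : ℤ) * m + n - 2) := by
    have hinner : ∀ i : Fin n, ∑ p : Fin n × Fin m,
        (if i = p.1 then |(Dn n m (i:ℕ) : ℤ) - (1 : ℤ)| else 0)
        = (m : ℤ) * |(Dn n m (i:ℕ) : ℤ) - 1| := by
      intro i
      rw [Fintype.sum_prod_type]
      have : ∀ a : Fin n, ∑ b : Fin m, (if i = (a, b).1 then |(Dn n m (i:ℕ) : ℤ) - 1| else 0)
          = (if i = a then (m : ℤ) * |(Dn n m (i:ℕ) : ℤ) - 1| else 0) := by
        intro a; simp only []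
        split_ifs <;> simp [mul_comm]
      rw [Finset.sum_congr rfl (fun a _ => this a),
        Finset.sum_ite_eq (Finset.univ : Finset (Fin n)) i
          (fun _ => (m : ℤ) * |(Dn n m (i:ℕ) : ℤ) - 1|)]
      try simp
    rw [Finset.sum_congr rfl (fun i _ => hinner i), ← Finset.mul_sum]
    rw [Fin.sum_univ_eq_sum_range (fun x => |(Dn n m x : ℤ) - 1|) n, hSZ]
  -- RL block
  have hRL : ∑ p : Fin n × Fin m, ∑ j : Fin n,
      (if j = p.1 then |(1 : ℤ) - (Dn n m (j:ℕ) : ℤ)| else 0)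
      = (m : ℤ) * ((n : ℤ) * m + n - 2) := by
    have hinner : ∀ p : Fin n × Fin m, ∑ j : Fin n,
        (if j = p.1 then |(1 : ℤ) - (Dn n m (j:ℕ) : ℤ)| else 0)
        = |(Dn n m (p.1:ℕ) : ℤ) - 1| := by
      intro p
      rw [Finset.sum_ite_eq' (Finset.univ : Finset (Fin n)) p.1
        (fun j => |(1 : ℤ) - (Dn n m (j:ℕ) : ℤ)|)]
      try simp [abs_sub_comm]
    rw [Finset.sum_congr rfl (fun p _ => hinner p), Fintype.sum_prod_type]
    have : ∀ a : Fin n, ∑ _b : Fin m, |(Dn n m (a:ℕ) : ℤ) - 1|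
        = (m : ℤ) * |(Dn n m (a:ℕ) : ℤ) - 1| := by
      intro a; rw [Finset.sum_const]; simp [mul_comm]
    rw [Finset.sum_congr rfl (fun a _ => this a), ← Finset.mul_sum]
    rw [Fin.sum_univ_eq_sum_range (fun x => |(Dn n m x : ℤ) - 1|) n, hSZ]
  simp only [Nat.cast_one] at key
  rw [Finset.sum_add_distrib] at key
  rw [hLL, hLR, hRL] at key
  have h2ne : (2 : ℤ) ≠ 0 := by norm_num
  apply mul_left_cancel₀ h2ne
  rw [key]; push_cast; ring
end

section
/- Among all trees on n ≥ 3 vertices, the Albertson index is at most (n-1)(n-2), with equality if and only if the tree is the star S_n. -/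
open scoped Classical

/-!
Every edge term `|deg u - deg v|` is at most `n - 2`, because in a graph on `n` vertices an
endpoint of an edge has degree between `1` and `n - 1`; a tree has `n - 1` edges. Equality forces
every edge to join a vertex of degree `n - 1` to a leaf. A vertex of degree `n - 1` is adjacent to
all others, which are then leaves, so the tree is a star.
-/

open Finset

namespace SimpleGraph

variable {V : Type*} {G : SimpleGraph V} {u v : V}

lemma nonempty_iso_starGraph_iff {r : V} :
    Nonempty (G ≃g starGraph r) ↔ ∃ c, G = starGraph c := by
  constructor
  · rintro ⟨f⟩
    refine ⟨f.symm r, SimpleGraph.ext <| funext₂ fun u v => propext ?_⟩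
    rw [← f.map_adj_iff, starGraph_adj, starGraph_adj, f.injective.ne_iff, ← f.eq_symm_apply,
      ← f.eq_symm_apply]
  · rintro ⟨c, rfl⟩
    exact ⟨⟨Equiv.swap c r, by simp [Equiv.swap_apply_eq_iff]⟩⟩

variable [Fintype V]

lemma abs_degree_sub_degree_le_of_adj (h : G.Adj u v) :
    |(G.degree u : ℤ) - G.degree v| ≤ Fintype.card V - 2 := by
  have hu := G.degree_pos_iff_exists_adj u |>.2 ⟨v, h⟩
  have hv := G.degree_pos_iff_exists_adj v |>.2 ⟨u, h.symm⟩
  have := G.degree_lt_card_verts u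
  have := G.degree_lt_card_verts v
  rw [abs_le]
  omega

lemma degree_eq_of_abs_degree_sub_degree_eq (h : G.Adj u v)
    (heq : |(G.degree u : ℤ) - G.degree v| = Fintype.card V - 2) :
    G.degree u = Fintype.card V - 1 ∧ G.degree v = 1 ∨
      G.degree u = 1 ∧ G.degree v = Fintype.card V - 1 := by
  have hu := G.degree_pos_iff_exists_adj u |>.2 ⟨v, h⟩
  have hv := G.degree_pos_iff_exists_adj v |>.2 ⟨u, h.symm⟩
  have := G.degree_lt_card_verts u
  have := G.degree_lt_card_verts v
  rcases abs_cases ((G.degree u : ℤ) - G.degree v) with ⟨h', _⟩ | ⟨h', _⟩ <;> omega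

lemma albertson_le_card_edgeFinset_mul {k : ℤ}
    (h : ∀ u v, G.Adj u v → |(G.degree u : ℤ) - G.degree v| ≤ k) :
    albertson G ≤ #G.edgeFinset * k := by
  rw [albertson, ← nsmul_eq_mul]
  refine Finset.sum_le_card_nsmul _ _ _ ?_
  simpa [Sym2.forall] using h

lemma albertson_eq_card_edgeFinset_mul_iff {k : ℤ}
    (h : ∀ u v, G.Adj u v → |(G.degree u : ℤ) - G.degree v| ≤ k) :
    albertson G = #G.edgeFinset * k ↔
      ∀ u v, G.Adj u v → |(G.degree u : ℤ) - G.degree v| = k := by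
  rw [albertson, ← nsmul_eq_mul, ← Finset.sum_const, Finset.sum_eq_sum_iff_of_le]
  · simp [Sym2.forall]
  · simpa [Sym2.forall] using h

lemma abs_degree_sub_degree_starGraph_of_adj {c : V} (h : (starGraph c).Adj u v) :
    |((starGraph c).degree u : ℤ) - (starGraph c).degree v| = Fintype.card V - 2 := by
  have hcard : 1 < Fintype.card V := Fintype.one_lt_card_iff.2 ⟨u, v, h.ne⟩
  obtain ⟨huv, rfl | rfl⟩ := starGraph_adj.1 h
  · rw [degree_starGraph_center, degree_starGraph_of_ne_center huv.symm, abs_of_nonneg] <;> omega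
  · rw [degree_starGraph_center, degree_starGraph_of_ne_center huv, abs_of_nonpos] <;> omega

lemma exists_eq_starGraph_of_forall_adj (hG : G ≠ ⊥)
    (h : ∀ u v, G.Adj u v → |(G.degree u : ℤ) - G.degree v| = Fintype.card V - 2) :
    ∃ c, G = starGraph c := by
  obtain ⟨a, b, hab⟩ := ne_bot_iff_exists_adj.1 hG
  obtain ⟨c, hc⟩ : ∃ c, G.degree c = Fintype.card V - 1 := by
    rcases degree_eq_of_abs_degree_sub_degree_eq hab (h a b hab) with ⟨ha, -⟩ | ⟨-, hb⟩
    exacts [⟨a, ha⟩, ⟨b, hb⟩]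
  have hc_univ : G.IsUniversal c := (G.degree_eq_card_sub_one c).1 hc
  have hleaf (v : V) (hv : v ≠ c) : G.degree v = 1 := by
    have := degree_eq_of_abs_degree_sub_degree_eq (hc_univ hv.symm) (h _ _ (hc_univ hv.symm))
    omega
  refine ⟨c, SimpleGraph.ext <| funext₂ fun u v => propext ⟨fun huv => ?_, fun huv => ?_⟩⟩
  · refine starGraph_adj.2 ⟨huv.ne, or_iff_not_imp_left.2 fun hu => ?_⟩
    obtain ⟨w, -, hw⟩ := degree_eq_one_iff_existsUnique_adj.1 (hleaf u hu)
    exact (hw v huv).trans (hw c (hc_univ (Ne.symm hu)).symm).symm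
  · obtain ⟨hne, rfl | rfl⟩ := starGraph_adj.1 huv
    exacts [hc_univ hne, (hc_univ hne.symm).symm]

end SimpleGraph

theorem starGraph_eq_simpleGraph_starGraph {n : ℕ} (hn : 0 < n) :
    starGraph n = SimpleGraph.starGraph (⟨0, hn⟩ : Fin n) := by
  ext u v
  simp [starGraph, SimpleGraph.starGraph, Fin.ext_iff]

theorem stmt9 (n : ℕ) (hn : 3 ≤ n) (T : SimpleGraph (Fin n)) (hT : T.IsTree) :
    albertson T ≤ ((n : ℤ) - 1) * ((n : ℤ) - 2) ∧
      (albertson T = ((n : ℤ) - 1) * ((n : ℤ) - 2) ↔ Nonempty (T ≃g starGraph n)) := by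
  have hedges : (#T.edgeFinset : ℤ) = n - 1 := by
    have := hT.card_edgeFinset
    simp only [Fintype.card_fin] at this
    omega
  have hle (u v : Fin n) (h : T.Adj u v) : |(T.degree u : ℤ) - T.degree v| ≤ n - 2 := by
    simpa using SimpleGraph.abs_degree_sub_degree_le_of_adj h
  have hT_ne_bot : T ≠ ⊥ := by
    rw [Ne, ← SimpleGraph.edgeFinset_eq_empty, ← Finset.card_eq_zero]
    omega
  rw [← hedges, SimpleGraph.albertson_eq_card_edgeFinset_mul_iff hle,
    starGraph_eq_simpleGraph_starGraph (by omega), SimpleGraph.nonempty_iso_starGraph_iff]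
  refine ⟨SimpleGraph.albertson_le_card_edgeFinset_mul hle, fun h => ?_, ?_⟩
  · exact SimpleGraph.exists_eq_starGraph_of_forall_adj hT_ne_bot (by simpa using h)
  · rintro ⟨c, rfl⟩ u v h
    convert SimpleGraph.abs_degree_sub_degree_starGraph_of_adj h
    simp
end

section
/- For any tree T on n ≥ 3 vertices, the sigma index satisfies σ(T) ≤ (n-1)(n-2)^2, with equality for the star S_n. -/
open scoped Classical

lemma star_adj (n : ℕ) [NeZero n] (u v : Fin n) :
    (starGraph n).Adj u v ↔ u ≠ v ∧ (u = 0 ∨ v = 0) := by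
  simp only [starGraph, SimpleGraph.fromRel_adj, ne_eq]
  constructor
  · rintro ⟨h1, h2⟩
    refine ⟨h1, ?_⟩
    rcases h2 with h | h
    · exact Or.inl (Fin.ext h)
    · exact Or.inr (Fin.ext h)
  · rintro ⟨h1, h2⟩
    refine ⟨h1, ?_⟩
    rcases h2 with rfl | rfl
    · exact Or.inl rfl
    · exact Or.inr rfl

lemma star_degree_zero (n : ℕ) [NeZero n] :
    (starGraph n).degree 0 = n - 1 := by
  have h : (starGraph n).neighborFinset 0 = Finset.univ.erase 0 := by
    ext w
    simp [SimpleGraph.mem_neighborFinset, star_adj, eq_comm, ne_comm]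
  rw [SimpleGraph.degree, h, Finset.card_erase_of_mem (Finset.mem_univ _)]
  simp

lemma star_degree_ne (n : ℕ) [NeZero n] (v : Fin n) (hv : v ≠ 0) :
    (starGraph n).degree v = 1 := by
  have h : (starGraph n).neighborFinset v = {0} := by
    ext w
    simp only [SimpleGraph.mem_neighborFinset, star_adj, Finset.mem_singleton]
    constructor
    · rintro ⟨hne, h0 | h0⟩
      · exact absurd h0 hv
      · exact h0
    · rintro rfl; exact ⟨hv, Or.inr rfl⟩
  rw [SimpleGraph.degree, h, Finset.card_singleton]

lemma star_card_edges (n : ℕ) (hn : 3 ≤ n) :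
    (starGraph n).edgeFinset.card = n - 1 := by
  haveI : NeZero n := ⟨by omega⟩
  have hsum := SimpleGraph.sum_degrees_eq_twice_card_edges (starGraph n)
  have h : ∑ v : Fin n, (starGraph n).degree v = 2 * (n - 1) := by
    rw [← Finset.sum_erase_add _ _ (Finset.mem_univ (0 : Fin n))]
    rw [star_degree_zero]
    have : ∑ v ∈ Finset.univ.erase (0 : Fin n), (starGraph n).degree v
        = ∑ v ∈ Finset.univ.erase (0 : Fin n), 1 := by
      apply Finset.sum_congr rfl
      intro v hv
      exact star_degree_ne n v (Finset.mem_erase.1 hv).1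
    rw [this, Finset.sum_const, smul_eq_mul, mul_one,
      Finset.card_erase_of_mem (Finset.mem_univ _)]
    simp
    omega
  omega

theorem stmt10 (n : ℕ) (hn : 3 ≤ n) (T : SimpleGraph (Fin n)) (hT : T.IsTree) :
    sigmaIdx T ≤ ((n : ℤ) - 1) * ((n : ℤ) - 2) ^ 2 ∧
      sigmaIdx (starGraph n) = ((n : ℤ) - 1) * ((n : ℤ) - 2) ^ 2 := by
  haveI : NeZero n := ⟨by omega⟩
  constructor
  · -- upper bound
    have hcard : T.edgeFinset.card = n - 1 := by
      have := hT.card_edgeFinset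
      simp only [Fintype.card_fin] at this
      omega
    have hbound : ∀ e ∈ T.edgeFinset,
        Sym2.lift ⟨fun u v => ((T.degree u : ℤ) - (T.degree v : ℤ))^2,
          fun u v => by ring⟩ e ≤ ((n : ℤ) - 2) ^ 2 := by
      intro e he
      induction e with
      | _ u v =>
        rw [SimpleGraph.mem_edgeFinset, SimpleGraph.mem_edgeSet] at he
        have h1u : 1 ≤ T.degree u := by
          rw [← SimpleGraph.card_neighborFinset_eq_degree]
          exact Finset.card_pos.2 ⟨v, by simp [SimpleGraph.mem_neighborFinset, he]⟩
        have h1v : 1 ≤ T.degree v := by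
          rw [← SimpleGraph.card_neighborFinset_eq_degree]
          exact Finset.card_pos.2 ⟨u, by simp [SimpleGraph.mem_neighborFinset, he.symm]⟩
        have h2u : T.degree u < n := by
          have := T.degree_lt_card_verts u
          simpa using this
        have h2v : T.degree v < n := by
          have := T.degree_lt_card_verts v
          simpa using this
        simp only [Sym2.lift_mk]
        apply sq_le_sq'
        · have : (T.degree u : ℤ) ≥ 1 := by exact_mod_cast h1u
          have : (T.degree v : ℤ) ≤ n - 1 := by
            have : (T.degree v : ℤ) < n := by exact_mod_cast h2v
            omega
          omega
        · have : (T.degree v : ℤ) ≥ 1 := by exact_mod_cast h1v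
          have : (T.degree u : ℤ) ≤ n - 1 := by
            have : (T.degree u : ℤ) < n := by exact_mod_cast h2u
            omega
          omega
    calc sigmaIdx T ≤ T.edgeFinset.card • ((n : ℤ) - 2) ^ 2 :=
          Finset.sum_le_card_nsmul _ _ _ hbound
      _ = ((n : ℤ) - 1) * ((n : ℤ) - 2) ^ 2 := by
          rw [hcard, nsmul_eq_mul]
          congr 1
          omega
  · -- star value
    have hval : ∀ e ∈ (starGraph n).edgeFinset,
        Sym2.lift ⟨fun u v => (((starGraph n).degree u : ℤ) - ((starGraph n).degree v : ℤ))^2,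
          fun u v => by ring⟩ e = ((n : ℤ) - 2) ^ 2 := by
      intro e he
      induction e with
      | _ u v =>
        rw [SimpleGraph.mem_edgeFinset, SimpleGraph.mem_edgeSet, star_adj] at he
        obtain ⟨hne, h0 | h0⟩ := he
        · subst h0
          simp only [Sym2.lift_mk, star_degree_zero, star_degree_ne n v (Ne.symm hne)]
          have h1 : ((n - 1 : ℕ) : ℤ) = (n : ℤ) - 1 := by omega
          rw [h1]; push_cast; ring
        · subst h0
          simp only [Sym2.lift_mk, star_degree_zero, star_degree_ne n u hne]
          have h1 : ((n - 1 : ℕ) : ℤ) = (n : ℤ) - 1 := by omega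
          rw [h1]; push_cast; ring
    rw [sigmaIdx, Finset.sum_congr rfl hval, Finset.sum_const,
      star_card_edges n hn, nsmul_eq_mul]
    congr 1
    omega
end

section
/- For any simple connected graph G with minimum degree δ ≥ 1 and maximum degree Δ, the Albertson index satisfies irr(G) ≤ ((Δ - δ)/√(Δδ)) · √(|E(G)| · Σ_{uv ∈ E(G)} deg(u)·deg(v)). -/
open scoped Classical

/-- The second Zagreb index: sum over edges of deg(u)·deg(v). -/
noncomputable def zagreb2 {V : Type*} [Fintype V] (G : SimpleGraph V) : ℤ :=
  ∑ e ∈ G.edgeFinset,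
    Sym2.lift ⟨fun u v => (G.degree u : ℤ) * (G.degree v : ℤ), fun u v => by ring⟩ e


lemma pair_bound {a b x y : ℝ} (h1 : 1 ≤ a) (hax : a ≤ x) (hxb : x ≤ b)
    (hay : a ≤ y) (hyb : y ≤ b) :
    |x - y| ≤ (b - a) / Real.sqrt (b * a) * Real.sqrt (x * y) := by
  have ha0 : (0:ℝ) < a := by linarith
  have hb0 : (0:ℝ) < b := by linarith
  have hba : (0:ℝ) < b * a := by positivity
  have hs : (0:ℝ) < Real.sqrt (b * a) := Real.sqrt_pos.mpr hba
  rw [div_mul_eq_mul_div, le_div_iff₀ hs]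
  have h1' : |x - y| * Real.sqrt (b * a) = Real.sqrt ((x - y)^2 * (b * a)) := by
    rw [Real.sqrt_mul (sq_nonneg _), Real.sqrt_sq_eq_abs]
  have h2' : (b - a) * Real.sqrt (x * y) = Real.sqrt ((b - a)^2 * (x * y)) := by
    rw [Real.sqrt_mul (sq_nonneg _), Real.sqrt_sq (by linarith : (0:ℝ) ≤ b - a)]
  rw [h1', h2']
  apply Real.sqrt_le_sqrt
  have hbyax : 0 ≤ b*y - a*x := by nlinarith
  have hbxay : 0 ≤ b*x - a*y := by nlinarith
  nlinarith [mul_nonneg hbyax hbxay]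

theorem stmt11 {V : Type*} [Fintype V] [Nonempty V] (G : SimpleGraph V)
    (hc : G.Connected) (hδ : 1 ≤ G.minDegree) :
    (albertson G : ℝ) ≤
      (((G.maxDegree : ℝ) - (G.minDegree : ℝ)) /
          Real.sqrt ((G.maxDegree : ℝ) * (G.minDegree : ℝ))) *
        Real.sqrt ((G.edgeFinset.card : ℝ) * (zagreb2 G : ℝ)) := by
  set a : ℝ := (G.minDegree : ℝ) with ha
  set b : ℝ := (G.maxDegree : ℝ) with hb
  have h1 : (1:ℝ) ≤ a := by rw [ha]; exact_mod_cast hδ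
  set p : Sym2 V → ℝ := Sym2.lift ⟨fun u v => (G.degree u : ℝ) * (G.degree v : ℝ),
    fun u v => by ring⟩ with hp
  set C : ℝ := (b - a) / Real.sqrt (b * a) with hC
  have hC0 : 0 ≤ C := by
    obtain ⟨v⟩ := (inferInstance : Nonempty V)
    have h1' := G.minDegree_le_degree v
    have h2' := G.degree_le_maxDegree v
    have hab : a ≤ b := by rw [ha, hb]; exact_mod_cast le_trans h1' h2'
    have : 0 ≤ b - a := by linarith
    positivity
  have hZ : ((zagreb2 G : ℤ) : ℝ) = ∑ e ∈ G.edgeFinset, p e := by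
    rw [zagreb2]
    push_cast
    refine Finset.sum_congr rfl fun e _ => ?_
    induction e using Sym2.ind with
    | _ u v => simp [hp]
  have hA : ((albertson G : ℤ) : ℝ)
      = ∑ e ∈ G.edgeFinset, Sym2.lift
        ⟨fun u v => |(G.degree u : ℝ) - (G.degree v : ℝ)|,
          fun u v => by simp [abs_sub_comm]⟩ e := by
    rw [albertson]
    push_cast
    refine Finset.sum_congr rfl fun e _ => ?_
    induction e using Sym2.ind with
    | _ u v => simp
  rw [hA, hZ]
  have step1 : ∑ e ∈ G.edgeFinset, Sym2.lift
        ⟨fun u v => |(G.degree u : ℝ) - (G.degree v : ℝ)|,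
          fun u v => by simp [abs_sub_comm]⟩ e
      ≤ ∑ e ∈ G.edgeFinset, C * Real.sqrt (p e) := by
    refine Finset.sum_le_sum fun e he => ?_
    revert he
    induction e using Sym2.ind with
    | _ u v =>
      intro he
      simp only [Sym2.lift_mk, hp]
      have hdu1 := G.minDegree_le_degree u
      have hdu2 := G.degree_le_maxDegree u
      have hdv1 := G.minDegree_le_degree v
      have hdv2 := G.degree_le_maxDegree v
      exact pair_bound h1 (by rw [ha]; exact_mod_cast hdu1)
        (by rw [hb]; exact_mod_cast hdu2) (by rw [ha]; exact_mod_cast hdv1)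
        (by rw [hb]; exact_mod_cast hdv2)
  refine step1.trans ?_
  rw [← Finset.mul_sum]
  refine mul_le_mul_of_nonneg_left ?_ hC0
  have hpnn : ∀ e ∈ G.edgeFinset, 0 ≤ p e := by
    intro e _
    induction e using Sym2.ind with
    | _ u v =>
      simp only [Sym2.lift_mk, hp]
      positivity
  have hkey : (∑ e ∈ G.edgeFinset, Real.sqrt (p e))^2
      ≤ (G.edgeFinset.card : ℝ) * ∑ e ∈ G.edgeFinset, p e := by
    have hcs := Finset.sum_mul_sq_le_sq_mul_sq G.edgeFinset (fun _ => (1:ℝ))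
      (fun e => Real.sqrt (p e))
    simp only [one_mul, one_pow] at hcs
    calc (∑ e ∈ G.edgeFinset, Real.sqrt (p e))^2
        ≤ (∑ _e ∈ G.edgeFinset, (1:ℝ)) * ∑ e ∈ G.edgeFinset, (Real.sqrt (p e))^2 := hcs
      _ = (G.edgeFinset.card : ℝ) * ∑ e ∈ G.edgeFinset, p e := by
          rw [Finset.sum_const, nsmul_eq_mul, mul_one]
          congr 1
          exact Finset.sum_congr rfl fun e he => Real.sq_sqrt (hpnn e he)
  have hnn : 0 ≤ ∑ e ∈ G.edgeFinset, Real.sqrt (p e) :=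
    Finset.sum_nonneg fun e _ => Real.sqrt_nonneg _
  have hyn : (0:ℝ) ≤ (G.edgeFinset.card : ℝ) * ∑ e ∈ G.edgeFinset, p e :=
    mul_nonneg (Nat.cast_nonneg _) (Finset.sum_nonneg hpnn)
  exact (Real.le_sqrt hnn hyn).mpr hkey
end

section
/- For any tree T on n vertices, irr_T(T) ≤ (n²/4) · irr(T). -/
open scoped Classical

/-- Total irregularity: sum over all unordered pairs of distinct vertices of |deg u - deg v|. -/
noncomputable def totalIrr {V : Type*} [Fintype V] (G : SimpleGraph V) : ℤ :=
  ∑ e ∈ ({e : Sym2 V | ¬ e.IsDiag} : Set (Sym2 V)).toFinset,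
    Sym2.lift ⟨fun u v => |(G.degree u : ℤ) - (G.degree v : ℤ)|,
      fun u v => by simp [abs_sub_comm]⟩ e

/-!
Telescoping along the unique path from `u` to `v`, `|d u - d v|` is at most the sum of
`|d x - d y|` over the edges `xy` of that path, i.e. over the edges whose deletion separates
`u` from `v`. Summing over all pairs and exchanging the sums, each edge `e` is counted once for
every pair it separates. Since every vertex of `T - e` is still connected to one of the two ends
of `e`, these pairs have one end in each of two complementary sets of sizes `k` and `n - k`,
so there are at most `k (n - k) ≤ n² / 4` of them.
-/

def Sym2.absDiff {V α : Type*} [AddCommGroup α] [Lattice α] (f : V → α) : Sym2 V → α :=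
  Sym2.lift ⟨fun u v => |f u - f v|, fun _ _ => abs_sub_comm _ _⟩

namespace Sym2

variable {V α : Type*} [AddCommGroup α] [LinearOrder α] (f : V → α)

@[simp]
lemma absDiff_mk (u v : V) : absDiff f s(u, v) = |f u - f v| := rfl

variable [IsOrderedAddMonoid α]

lemma absDiff_nonneg (s : Sym2 V) : 0 ≤ absDiff f s := by
  induction s using Sym2.ind with
  | _ u v => exact abs_nonneg _

end Sym2

namespace SimpleGraph

variable {V α : Type*} [AddCommGroup α] [LinearOrder α] [IsOrderedAddMonoid α]
  {G : SimpleGraph V}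

def Separates (G : SimpleGraph V) (e : Sym2 V) : Sym2 V → Prop :=
  Sym2.lift ⟨fun u v => ¬ (G.deleteEdges {e}).Reachable u v, by simp [reachable_comm]⟩

@[simp]
lemma separates_mk {e : Sym2 V} {u v : V} :
    G.Separates e s(u, v) ↔ ¬ (G.deleteEdges {e}).Reachable u v := .rfl

lemma Walk.abs_sub_le_sum_absDiff (f : V → α) {u v : V} (p : G.Walk u v) :
    |f u - f v| ≤ (p.edges.map (Sym2.absDiff f)).sum := by
  induction p with
  | nil => simp
  | @cons u x v _ q ih =>
    calc |f u - f v| ≤ |f u - f x| + |f x - f v| := abs_sub_le _ _ _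
      _ ≤ _ := by simpa using ih

lemma IsAcyclic.separates_of_mem_edges (hG : G.IsAcyclic) {u v : V} {p : G.Walk u v}
    (hp : p.IsPath) {e : Sym2 V} (he : e ∈ p.edges) : G.Separates e s(u, v) := by
  induction e using Sym2.ind with
  | _ x y =>
    rw [separates_mk, reachable_deleteEdges_iff_exists_walk]
    rintro ⟨q, hq⟩
    have hpq : p = q.bypass :=
      congrArg Subtype.val ((hG.subsingleton_path u v).elim ⟨p, hp⟩ ⟨q.bypass, q.bypass_isPath⟩)
    exact hq (q.edges_bypass_subset_edges (hpq ▸ he))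

lemma Preconnected.reachable_deleteEdges_or (hG : G.Preconnected) (a b x : V) :
    (G.deleteEdges {s(a, b)}).Reachable a x ∨ (G.deleteEdges {s(a, b)}).Reachable b x := by
  induction (reachable_iff_reflTransGen x a).1 (hG x a)
    using Relation.ReflTransGen.head_induction_on with
  | refl => exact .inl .rfl
  | @head x y hxy _ ih =>
    by_cases he : s(x, y) = s(a, b)
    · rcases Sym2.eq_iff.1 he with ⟨rfl, -⟩ | ⟨rfl, -⟩
      exacts [.inl .rfl, .inr .rfl]
    · have hyx : (G.deleteEdges {s(a, b)}).Adj y x := (deleteEdges_adj.2 ⟨hxy, he⟩).symm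
      exact ih.imp (·.trans hyx.reachable) (·.trans hyx.reachable)

section Finite

open Finset

variable [Fintype V]

lemma Preconnected.four_mul_card_separates_le (hG : G.Preconnected) (e : Sym2 V) :
    4 * #{s : Sym2 V | G.Separates e s} ≤ Fintype.card V ^ 2 := by
  induction e using Sym2.ind with
  | _ a b =>
    set R := (G.deleteEdges {s(a, b)}).Reachable
    set S : Finset V := {x | R a x}
    have hsub : ({s | G.Separates s(a, b) s} : Finset (Sym2 V)) ⊆
        (S ×ˢ Sᶜ).image fun q => s(q.1, q.2) := by
      intro s hs
      induction s using Sym2.ind with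
      | _ u v =>
        have huv : ¬ R u v := by simpa using hs
        simp only [mem_image, mem_product, S, mem_compl, mem_filter, mem_univ, true_and,
          Prod.exists]
        -- every vertex of `G - e` stays connected to `a` or to `b`
        by_cases hu : R a u <;> by_cases hv : R a v
        · exact absurd (hu.symm.trans hv) huv
        · exact ⟨u, v, ⟨hu, hv⟩, rfl⟩
        · exact ⟨v, u, ⟨hv, hu⟩, Sym2.eq_swap⟩
        · have hbu := (hG.reachable_deleteEdges_or a b u).resolve_left hu
          have hbv := (hG.reachable_deleteEdges_or a b v).resolve_left hv
          exact absurd (hbu.symm.trans hbv) huv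
    calc 4 * #{s : Sym2 V | G.Separates s(a, b) s} ≤ 4 * (#S * #Sᶜ) := by
          gcongr
          exact (card_le_card hsub).trans (card_image_le.trans (card_product _ _).le)
      _ ≤ (#S + #Sᶜ) ^ 2 := by rw [← mul_assoc]; exact four_mul_le_sq_add _ _
      _ = Fintype.card V ^ 2 := by rw [card_add_card_compl]

lemma IsTree.absDiff_le_sum_separates (hG : G.IsTree) (f : V → α) (s : Sym2 V) :
    Sym2.absDiff f s ≤ ∑ e ∈ G.edgeFinset with G.Separates e s, Sym2.absDiff f e := by
  induction s using Sym2.ind with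
  | _ u v =>
    obtain ⟨p, hp⟩ := (hG.connected.preconnected u v).exists_isPath
    calc Sym2.absDiff f s(u, v) ≤ (p.edges.map (Sym2.absDiff f)).sum :=
          p.abs_sub_le_sum_absDiff f
      _ = ∑ e ∈ p.edges.toFinset, Sym2.absDiff f e :=
          (List.sum_toFinset _ hp.isTrail.edges_nodup).symm
      _ ≤ _ := by
        refine sum_le_sum_of_subset_of_nonneg (fun e he => ?_)
          (fun e _ _ => Sym2.absDiff_nonneg f e)
        rw [List.mem_toFinset] at he
        exact mem_filter.2 ⟨mem_edgeFinset.2 (p.edges_subset_edgeSet he),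
          hG.isAcyclic.separates_of_mem_edges hp he⟩

lemma IsTree.four_nsmul_sum_absDiff_le (hG : G.IsTree) (f : V → α) :
    4 • ∑ s : Sym2 V, Sym2.absDiff f s ≤
      Fintype.card V ^ 2 • ∑ e ∈ G.edgeFinset, Sym2.absDiff f e := by
  have hswap : ∑ s : Sym2 V, ∑ e ∈ G.edgeFinset with G.Separates e s, Sym2.absDiff f e =
      ∑ e ∈ G.edgeFinset, #{s : Sym2 V | G.Separates e s} • Sym2.absDiff f e := by
    simp_rw [sum_filter]
    rw [sum_comm]
    refine sum_congr rfl fun e _ => ?_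
    rw [← sum_filter, sum_const]
  calc 4 • ∑ s : Sym2 V, Sym2.absDiff f s
      ≤ 4 • ∑ s : Sym2 V, ∑ e ∈ G.edgeFinset with G.Separates e s, Sym2.absDiff f e :=
        nsmul_le_nsmul_right (sum_le_sum fun s _ => hG.absDiff_le_sum_separates f s) 4
    _ = ∑ e ∈ G.edgeFinset, (4 * #{s : Sym2 V | G.Separates e s}) • Sym2.absDiff f e := by
        simp_rw [hswap, smul_sum, mul_nsmul']
    _ ≤ ∑ e ∈ G.edgeFinset, Fintype.card V ^ 2 • Sym2.absDiff f e :=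
        sum_le_sum fun e _ => nsmul_le_nsmul_left (Sym2.absDiff_nonneg f e)
          (hG.connected.preconnected.four_mul_card_separates_le e)
    _ = Fintype.card V ^ 2 • ∑ e ∈ G.edgeFinset, Sym2.absDiff f e := smul_sum.symm

end Finite

end SimpleGraph

lemma totalIrr_eq_sum_absDiff {V : Type*} [Fintype V] (G : SimpleGraph V) :
    totalIrr G = ∑ s : Sym2 V, Sym2.absDiff (fun v => (G.degree v : ℤ)) s := by
  refine Finset.sum_subset (Finset.subset_univ _) fun s _ hs => ?_
  induction s using Sym2.ind with
  | _ u v =>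
    obtain rfl : u = v := by simpa using hs
    simp

lemma albertson_eq_sum_absDiff {V : Type*} [Fintype V] (G : SimpleGraph V) :
    albertson G = ∑ e ∈ G.edgeFinset, Sym2.absDiff (fun v => (G.degree v : ℤ)) e := rfl

theorem stmt13 (n : ℕ) (T : SimpleGraph (Fin n)) (hT : T.IsTree) :
    (totalIrr T : ℚ) ≤ (n : ℚ) ^ 2 / 4 * (albertson T : ℚ) := by
  have key : 4 * totalIrr T ≤ n ^ 2 * albertson T := by
    simpa [totalIrr_eq_sum_absDiff, albertson_eq_sum_absDiff] using
      hT.four_nsmul_sum_absDiff_le fun v => (T.degree v : ℤ)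
  have key' : 4 * (totalIrr T : ℚ) ≤ n ^ 2 * albertson T := by exact_mod_cast key
  linarith
end
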